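/- The combinatorial definition of ELC agrees with the algebraic one: for a graph G with edge {u,v}, the graph obtained by toggling all pairs {x,y} where x and y lie in distinct classes among A (neighbours of u only), B (neighbours of v only), C (common neighbours), followed by swapping the labels of u and v, equals G*u*v*u. -/

import Mathlib

/-- Local complementation at a vertex `v`: toggle all edges between
distinct neighbours of `v`. -/
def localComp {V : Type} (G : SimpleGraph V) (v : V) : SimpleGraph V where
  Adj x y := x ≠ y ∧ Xor' (G.Adj x y) (G.Adj v x ∧ G.Adj v y)
  symm := by
    constructor
    intro x y ⟨hxy, h⟩
    refine ⟨hxy.symm, ?_⟩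
    rw [G.adj_comm y x, and_comm]
    exact h
  loopless := ⟨fun x h => h.1 rfl⟩

/-- Edge local complementation on the edge `{u,v}`: `G*u*v*u`. -/
def elc {V : Type} (G : SimpleGraph V) (u v : V) : SimpleGraph V :=
  localComp (localComp (localComp G u) v) u

/-- The "toggle" part of the combinatorial definition of ELC on `{u,v}`:
toggle every pair `{x,y}` of vertices outside `{u,v}` that lie in distinct
classes among `A` (neighbours of `u` only), `B` (neighbours of `v` only)
and `C` (common neighbours). -/
def elcToggle {V : Type} (G : SimpleGraph V) (u v : V) : SimpleGraph V where
  Adj x y := x ≠ y ∧ Xor' (G.Adj x y)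
    (x ≠ u ∧ x ≠ v ∧ y ≠ u ∧ y ≠ v ∧
      (G.Adj u x ∨ G.Adj v x) ∧ (G.Adj u y ∨ G.Adj v y) ∧
      ¬((G.Adj u x ↔ G.Adj u y) ∧ (G.Adj v x ↔ G.Adj v y)))
  symm := by
    constructor
    intro x y ⟨hxy, h⟩
    refine ⟨hxy.symm, ?_⟩
    rw [G.adj_comm y x]
    have hc : (y ≠ u ∧ y ≠ v ∧ x ≠ u ∧ x ≠ v ∧
        (G.Adj u y ∨ G.Adj v y) ∧ (G.Adj u x ∨ G.Adj v x) ∧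
        ¬((G.Adj u y ↔ G.Adj u x) ∧ (G.Adj v y ↔ G.Adj v x))) ↔
        (x ≠ u ∧ x ≠ v ∧ y ≠ u ∧ y ≠ v ∧
        (G.Adj u x ∨ G.Adj v x) ∧ (G.Adj u y ∨ G.Adj v y) ∧
        ¬((G.Adj u x ↔ G.Adj u y) ∧ (G.Adj v x ↔ G.Adj v y))) := by
      constructor <;>
        (rintro ⟨a, b, c, d, e, f, g⟩; exact ⟨c, d, a, b, f, e, fun ⟨p, q⟩ => g ⟨p.symm, q.symm⟩⟩)
    rw [hc]
    exact h
  loopless := ⟨fun x h => h.1 rfl⟩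

/-!
Both graphs keep the edge `uv`, and in both the vertices `u` and `v` end up with each other's
original neighbourhoods (after the relabelling in the combinatorial version). For `x, y ∉ {u, v}`
write `a, b, c, d` for the adjacencies `ux, vx, uy, vy` in `G`. The three local complementations
toggle `xy` by `ac`, then by `(a ⊕ b)(c ⊕ d)` (since `G*u` has `vx = a ⊕ b`), then by `bd` (since
`u` has inherited `v`'s neighbourhood in `G*u*v`); the sum is `ad ⊕ bc`, which holds exactly when
`x` and `y` lie in distinct classes among `A`, `B`, `C`.
-/

namespace SimpleGraph

variable {V : Type}

theorem ext_of_adj_of_pair {G H : SimpleGraph V} (u v : V)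
    (hu : ∀ y, G.Adj u y ↔ H.Adj u y) (hv : ∀ y, G.Adj v y ↔ H.Adj v y)
    (hne : ∀ x y, x ≠ u → x ≠ v → y ≠ u → y ≠ v → (G.Adj x y ↔ H.Adj x y)) : G = H := by
  ext x y
  by_cases hxu : x = u
  · exact hxu ▸ hu y
  by_cases hxv : x = v
  · exact hxv ▸ hv y
  by_cases hyu : y = u
  · rw [hyu, G.adj_comm, H.adj_comm]; exact hu x
  by_cases hyv : y = v
  · rw [hyv, G.adj_comm, H.adj_comm]; exact hv x
  exact hne x y hxu hxv hyu hyv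

theorem map_swap_adj [DecidableEq V] (G : SimpleGraph V) (u v x y : V) :
    (G.map (Equiv.swap u v).toEmbedding).Adj x y ↔
      G.Adj (Equiv.swap u v x) (Equiv.swap u v y) := by
  rw [← comap_symm, comap_adj, Equiv.symm_swap, Equiv.coe_toEmbedding]

end SimpleGraph

section

variable {V : Type} {G : SimpleGraph V} {u v w x y : V}

@[simp]
theorem localComp_adj :
    (localComp G w).Adj x y ↔ x ≠ y ∧ Xor (G.Adj x y) (G.Adj w x ∧ G.Adj w y) :=
  Iff.rfl

theorem elc_adj_left [DecidableEq V] (h : G.Adj u v) (y : V) :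
    (elc G u v).Adj u y ↔ G.Adj v (Equiv.swap u v y) := by
  simp only [elc, localComp_adj]
  grind [SimpleGraph.Adj.ne, SimpleGraph.irrefl, SimpleGraph.adj_comm]

theorem elc_adj_right [DecidableEq V] (h : G.Adj u v) (y : V) :
    (elc G u v).Adj v y ↔ G.Adj u (Equiv.swap u v y) := by
  simp only [elc, localComp_adj]
  grind [SimpleGraph.Adj.ne, SimpleGraph.irrefl, SimpleGraph.adj_comm]

theorem elc_adj_of_ne (h : G.Adj u v) (hxu : x ≠ u) (hxv : x ≠ v) (hyu : y ≠ u) (hyv : y ≠ v) :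
    (elc G u v).Adj x y ↔
      x ≠ y ∧ Xor (G.Adj x y) (Xor (G.Adj u x ∧ G.Adj v y) (G.Adj v x ∧ G.Adj u y)) := by
  simp only [elc, localComp_adj]
  grind [SimpleGraph.Adj.ne, SimpleGraph.adj_comm]

theorem elcToggle_adj_left : (elcToggle G u v).Adj u y ↔ G.Adj u y := by
  simp only [elcToggle, Xor']
  grind [SimpleGraph.Adj.ne]

theorem elcToggle_adj_right : (elcToggle G u v).Adj v y ↔ G.Adj v y := by
  simp only [elcToggle, Xor']
  grind [SimpleGraph.Adj.ne]

theorem elcToggle_adj_of_ne (hxu : x ≠ u) (hxv : x ≠ v) (hyu : y ≠ u) (hyv : y ≠ v) :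
    (elcToggle G u v).Adj x y ↔
      x ≠ y ∧ Xor (G.Adj x y) (Xor (G.Adj u x ∧ G.Adj v y) (G.Adj v x ∧ G.Adj u y)) := by
  simp only [elcToggle, Xor', ne_eq, hxu, hxv, hyu, hyv, not_false_eq_true, true_and]
  grind

end

/-- The combinatorial definition of ELC agrees with the algebraic one:
toggling pairs in distinct classes among `A`, `B`, `C` and then swapping
the labels of `u` and `v` yields `G*u*v*u`. -/
theorem elcComb_eq_elc {V : Type} [DecidableEq V] (G : SimpleGraph V) (u v : V)
    (h : G.Adj u v) :
    (elcToggle G u v).map (Equiv.swap u v).toEmbedding = elc G u v := by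
  refine SimpleGraph.ext_of_adj_of_pair u v (fun y => ?_) (fun y => ?_)
    (fun x y hxu hxv hyu hyv => ?_)
  · rw [SimpleGraph.map_swap_adj, Equiv.swap_apply_left, elcToggle_adj_right, elc_adj_left h]
  · rw [SimpleGraph.map_swap_adj, Equiv.swap_apply_right, elcToggle_adj_left, elc_adj_right h]
  · rw [SimpleGraph.map_swap_adj, Equiv.swap_apply_of_ne_of_ne hxu hxv,
      Equiv.swap_apply_of_ne_of_ne hyu hyv, elcToggle_adj_of_ne hxu hxv hyu hyv,
      elc_adj_of_ne h hxu hxv hyu hyv]
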